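/- arXiv:2107.06309 — 2 statements merged into one kernel-verified Lean document; each statement's English description precedes it below -/
import Mathlib

section
/- For all positive integers d ≤ n, there exists a function f : {±1}^n → [-1,1] whose Fourier expansion is supported on sets of size exactly d (i.e., f is homogeneous of degree d) and which satisfies ‖f̂_d‖_1 = (1/2)·√((1/n)·binom(n,d)). -/
/-- The sign ±1 corresponding to a boolean: `true ↦ 1`, `false ↦ -1`. -/
noncomputable def sgn (b : Bool) : ℝ := if b then 1 else -1

/-- The character (monomial) `χ_S(x) = ∏_{j ∈ S} x_j` on the cube `{±1}^n`. -/
noncomputable def chi {n : ℕ} (S : Finset (Fin n)) (x : Fin n → Bool) : ℝ :=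
  ∏ i ∈ S, sgn (x i)

/-- The Fourier coefficient `f̂(S) = E[f(X) χ_S(X)]` for `X` uniform on `{±1}^n`. -/
noncomputable def fcoeff {n : ℕ} (f : (Fin n → Bool) → ℝ) (S : Finset (Fin n)) : ℝ :=
  (∑ x : Fin n → Bool, f x * chi S x) / 2 ^ n

/-- The degree-`ℓ` homogeneous part `f_ℓ(x) = ∑_{|S| = ℓ} f̂(S) χ_S(x)`. -/
noncomputable def homPart {n : ℕ} (f : (Fin n → Bool) → ℝ) (ℓ : ℕ) (x : Fin n → Bool) : ℝ :=
  ∑ S ∈ Finset.univ.filter (fun S : Finset (Fin n) => S.card = ℓ), fcoeff f S * chi S x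

/-- `C(d, ℓ)`: the coefficient of `z^ℓ` in the degree-`d` Chebyshev polynomial `T_d`. -/
noncomputable def chebCoeff (d ℓ : ℕ) : ℝ := (Polynomial.Chebyshev.T ℝ (d : ℤ)).coeff ℓ

/-!
Take `f = a · ∑_{|S| = d} ε_S χ_S` with signs `ε_S`, so that `f` is homogeneous of degree `d` and
`‖f̂_d‖_1 = a · binom(n, d)`. For each fixed `x` the value `∑ ε_S χ_S(x)` is a Rademacher sum of
`N = binom(n, d)` terms, so by the Chernoff bound it exceeds `2 √(n N)` for at most a fraction
`2 exp (-2n) < 2^{-n}` of the sign vectors. A union bound over the `2^n` points of the cube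
yields signs with `|∑ ε_S χ_S(x)| ≤ 2 √(n N)` everywhere, and `a = 1 / (2 √(n N))` works.
-/
open Finset Real

lemma sgn_sq (b : Bool) : sgn b ^ 2 = 1 := by
  cases b <;> norm_num [sgn]

lemma abs_sgn (b : Bool) : |sgn b| = 1 := by
  cases b <;> norm_num [sgn]

lemma chi_sq {n : ℕ} (S : Finset (Fin n)) (x : Fin n → Bool) : chi S x ^ 2 = 1 := by
  simp [chi, ← prod_pow, sgn_sq]

lemma sum_bool_sgn_mul (c : ℝ) : ∑ b : Bool, exp (sgn b * c) = 2 * cosh c := by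
  simp only [Fintype.sum_bool, sgn, if_true, Bool.false_eq_true, if_false, one_mul, neg_mul, cosh_eq]
  ring

lemma chi_eq_prod_univ {n : ℕ} (S : Finset (Fin n)) (x : Fin n → Bool) :
    chi S x = ∏ i, if i ∈ S then sgn (x i) else 1 := by
  rw [prod_ite_mem, univ_inter, chi]

lemma sum_chi_mul_chi {n : ℕ} (S T : Finset (Fin n)) :
    ∑ x : Fin n → Bool, chi S x * chi T x = if S = T then (2 : ℝ) ^ n else 0 := by
  have hfactor (i : Fin n) :
      ∑ b : Bool, (if i ∈ S then sgn b else 1) * (if i ∈ T then sgn b else 1) =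
        if (i ∈ S ↔ i ∈ T) then 2 else 0 := by
    by_cases hS : i ∈ S <;> by_cases hT : i ∈ T <;> norm_num [hS, hT, sgn]
  simp_rw [chi_eq_prod_univ, ← prod_mul_distrib]
  rw [← Fintype.prod_sum fun i b => (if i ∈ S then sgn b else 1) * (if i ∈ T then sgn b else 1),
    Fintype.prod_congr _ _ hfactor, Fintype.prod_ite_zero]
  simp [← Finset.ext_iff]

lemma fcoeff_sum_mul_chi {n : ℕ} (w : Finset (Fin n) → ℝ) (T : Finset (Fin n)) :
    fcoeff (fun x => ∑ S, w S * chi S x) T = w T := by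
  simp_rw [fcoeff, sum_mul, mul_assoc]
  rw [sum_comm]
  simp_rw [← mul_sum, sum_chi_mul_chi, mul_ite, mul_zero, sum_ite_eq', mem_univ, if_true]
  field_simp

section Rademacher

variable {ι : Type*} [Fintype ι]

noncomputable def rademacherSum (c : ι → ℝ) (ε : ι → Bool) : ℝ := ∑ i, sgn (ε i) * c i

variable [DecidableEq ι]

lemma sum_exp_mul_rademacherSum (c : ι → ℝ) (l : ℝ) :
    ∑ ε : ι → Bool, exp (l * rademacherSum c ε) = ∏ i, 2 * cosh (l * c i) := by
  simp_rw [rademacherSum, mul_sum, exp_sum]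
  rw [← Fintype.prod_sum fun i b => exp (l * (sgn b * c i))]
  simp_rw [mul_left_comm l, sum_bool_sgn_mul]

lemma sum_exp_mul_rademacherSum_le (c : ι → ℝ) (l : ℝ) :
    ∑ ε : ι → Bool, exp (l * rademacherSum c ε) ≤
      2 ^ Fintype.card ι * exp (l ^ 2 * (∑ i, c i ^ 2) / 2) := by
  rw [sum_exp_mul_rademacherSum]
  calc ∏ i, 2 * cosh (l * c i) ≤ ∏ i, 2 * exp ((l * c i) ^ 2 / 2) := by
        refine prod_le_prod (fun i _ => by positivity) fun i _ => ?_
        gcongr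
        exact cosh_le_exp_half_sq _
    _ = 2 ^ Fintype.card ι * exp (l ^ 2 * (∑ i, c i ^ 2) / 2) := by
        rw [prod_mul_distrib, ← exp_sum, prod_const, card_univ, mul_sum, sum_div]
        exact congrArg _ (congrArg _ (sum_congr rfl fun i _ => by ring))

lemma card_le_abs_rademacherSum_le (c : ι → ℝ) {s t : ℝ} (hs : 0 < s) (ht : 0 ≤ t)
    (hc : ∑ i, c i ^ 2 ≤ s) :
    (#{ε : ι → Bool | t ≤ |rademacherSum c ε|} : ℝ) ≤
      2 * 2 ^ Fintype.card ι * exp (-(t ^ 2 / (2 * s))) := by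
  set l := t / s
  have hl : 0 ≤ l := by positivity
  have hmarkov (ε : ι → Bool) (hε : t ≤ |rademacherSum c ε|) :
      exp (l * t) ≤ exp (l * rademacherSum c ε) + exp (-l * rademacherSum c ε) := by
    rcases abs_cases (rademacherSum c ε) with ⟨h, -⟩ | ⟨h, -⟩
    · have : exp (l * t) ≤ exp (l * rademacherSum c ε) := by gcongr; linarith
      linarith [exp_pos (-l * rademacherSum c ε)]
    · have : exp (l * t) ≤ exp (-l * rademacherSum c ε) := exp_le_exp.2 (by nlinarith)
      linarith [exp_pos (l * rademacherSum c ε)]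
  have hmgf (l' : ℝ) (hl' : l' ^ 2 = l ^ 2) :
      ∑ ε : ι → Bool, exp (l' * rademacherSum c ε) ≤ 2 ^ Fintype.card ι * exp (l ^ 2 * s / 2) :=
    (sum_exp_mul_rademacherSum_le c l').trans (by rw [hl']; gcongr)
  have hcount : #{ε : ι → Bool | t ≤ |rademacherSum c ε|} * exp (l * t) ≤
      2 * 2 ^ Fintype.card ι * exp (l ^ 2 * s / 2) := by
    calc _ = ∑ ε ∈ {ε : ι → Bool | t ≤ |rademacherSum c ε|}, exp (l * t) := by
          rw [sum_const, nsmul_eq_mul]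
      _ ≤ ∑ ε ∈ {ε : ι → Bool | t ≤ |rademacherSum c ε|},
            (exp (l * rademacherSum c ε) + exp (-l * rademacherSum c ε)) :=
          sum_le_sum fun ε hε => hmarkov ε (mem_filter.1 hε).2
      _ ≤ ∑ ε : ι → Bool, (exp (l * rademacherSum c ε) + exp (-l * rademacherSum c ε)) :=
          sum_le_sum_of_subset_of_nonneg (filter_subset _ _) fun _ _ _ => by positivity
      _ ≤ _ := by
          rw [sum_add_distrib]
          linarith [hmgf l rfl, hmgf (-l) (neg_sq l)]
  have hexponent : l ^ 2 * s / 2 - l * t = -(t ^ 2 / (2 * s)) := by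
    simp only [l]; field_simp; ring
  rw [← hexponent, exp_sub, ← mul_div_assoc, le_div_iff₀ (exp_pos _)]
  exact hcount

lemma exists_forall_abs_rademacherSum_le {κ : Type*} [Fintype κ] (c : κ → ι → ℝ) {s t : ℝ}
    (hs : 0 < s) (ht : 0 ≤ t) (hc : ∀ k, ∑ i, c k i ^ 2 ≤ s)
    (hκ : 2 * Fintype.card κ * exp (-(t ^ 2 / (2 * s))) < 1) :
    ∃ ε : ι → Bool, ∀ k, |rademacherSum (c k) ε| ≤ t := by
  by_contra! hbad
  have hcover : (univ : Finset (ι → Bool)) ⊆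
      univ.biUnion fun k => {ε : ι → Bool | t ≤ |rademacherSum (c k) ε|} := fun ε _ => by
    obtain ⟨k, hk⟩ := hbad ε
    exact mem_biUnion.2 ⟨k, mem_univ k, mem_filter.2 ⟨mem_univ ε, hk.le⟩⟩
  have hcard := (card_le_card hcover).trans card_biUnion_le
  have : (2 : ℝ) ^ Fintype.card ι ≤
      Fintype.card κ * (2 * 2 ^ Fintype.card ι * exp (-(t ^ 2 / (2 * s)))) := by
    calc (2 : ℝ) ^ Fintype.card ι = #(univ : Finset (ι → Bool)) := by simp
      _ ≤ ∑ k, (#{ε : ι → Bool | t ≤ |rademacherSum (c k) ε|} : ℝ) := by exact_mod_cast hcard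
      _ ≤ ∑ k : κ, 2 * 2 ^ Fintype.card ι * exp (-(t ^ 2 / (2 * s))) :=
          sum_le_sum fun k _ => card_le_abs_rademacherSum_le (c k) hs ht (hc k)
      _ = _ := by rw [sum_const, card_univ, nsmul_eq_mul]
  nlinarith [pow_pos (two_pos : (0 : ℝ) < 2) (Fintype.card ι)]

end Rademacher

lemma two_mul_two_pow_mul_exp_lt_one {n : ℕ} (hn : 0 < n) : 2 * 2 ^ n * exp (-(2 * n)) < 1 := by
  have hpow : (2 : ℝ) * 2 ^ n < exp 1 ^ (2 * n) :=
    calc (2 : ℝ) * 2 ^ n ≤ 2 ^ n * 2 ^ n := by gcongr; exact le_self_pow₀ one_le_two hn.ne'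
      _ = 2 ^ (2 * n) := by ring
      _ < exp 1 ^ (2 * n) := pow_lt_pow_left₀ exp_one_gt_two zero_le_two (by omega)
  rw [exp_one_pow] at hpow
  rw [exp_neg, ← div_eq_mul_inv, div_lt_one (exp_pos _)]
  exact_mod_cast hpow

lemma div_two_mul_sqrt_mul {x y : ℝ} (hx : 0 < x) (hy : 0 < y) :
    y / (2 * √(x * y)) = 1 / 2 * √(1 / x * y) := by
  rw [sqrt_mul hx.le, sqrt_mul (by positivity), one_div x, sqrt_inv]
  field_simp
  rw [sq_sqrt hy.le]

noncomputable def levelChi {n : ℕ} (d : ℕ) (x : Fin n → Bool) (S : Finset (Fin n)) : ℝ :=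
  if S.card = d then chi S x else 0

lemma sum_levelChi_sq (n d : ℕ) (x : Fin n → Bool) :
    ∑ S, levelChi d x S ^ 2 = n.choose d := by
  simp [levelChi, ite_pow, chi_sq]

lemma fcoeff_mul_rademacherSum_levelChi {n : ℕ} (d : ℕ) (a : ℝ) (ε : Finset (Fin n) → Bool)
    (T : Finset (Fin n)) :
    fcoeff (fun x => a * rademacherSum (levelChi d x) ε) T =
      if T.card = d then a * sgn (ε T) else 0 := by
  have hexpand : (fun x => a * rademacherSum (levelChi d x) ε) =
      fun x => ∑ S, (if S.card = d then a * sgn (ε S) else 0) * chi S x := by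
    ext x
    rw [rademacherSum, mul_sum]
    exact sum_congr rfl fun S _ => by unfold levelChi; split_ifs <;> ring
  rw [hexpand, fcoeff_sum_mul_chi]

lemma exists_forall_abs_rademacherSum_levelChi_le {n d : ℕ} (hn : 0 < n) (hdn : d ≤ n) :
    ∃ ε : Finset (Fin n) → Bool, ∀ x : Fin n → Bool,
      |rademacherSum (levelChi d x) ε| ≤ 2 * √(n * n.choose d) := by
  have hN : (0 : ℝ) < n.choose d := by exact_mod_cast Nat.choose_pos hdn
  have hexponent : (2 * √(n * n.choose d)) ^ 2 / (2 * n.choose d) = 2 * (n : ℝ) := by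
    rw [mul_pow, sq_sqrt (by positivity)]
    field_simp
  refine exists_forall_abs_rademacherSum_le _ hN (by positivity)
    (fun x => (sum_levelChi_sq n d x).le) ?_
  rw [hexponent]
  simpa using two_mul_two_pow_mul_exp_lt_one hn

/-- For all positive integers `d ≤ n` there is `f : {±1}^n → [-1,1]`, homogeneous of
degree `d`, with `‖f̂_d‖_1 = (1/2)·√((1/n)·binom(n,d))`. -/
theorem stmt5 (n d : ℕ) (hd : 0 < d) (hdn : d ≤ n) :
    ∃ f : (Fin n → Bool) → ℝ,
      (∀ x, |f x| ≤ 1) ∧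
      (∀ S : Finset (Fin n), S.card ≠ d → fcoeff f S = 0) ∧
      ∑ S ∈ Finset.univ.filter (fun S : Finset (Fin n) => S.card = d), |fcoeff f S| =
        (1 / 2) * Real.sqrt ((1 / n) * (n.choose d : ℝ)) := by
  have hn : 0 < n := hd.trans_le hdn
  obtain ⟨ε, hε⟩ := exists_forall_abs_rademacherSum_levelChi_le hn hdn
  have hN : (0 : ℝ) < n.choose d := by exact_mod_cast Nat.choose_pos hdn
  have hbound : 0 < 2 * √(n * n.choose d) := by positivity
  set a := 1 / (2 * √(n * n.choose d))
  have ha : 0 < a := one_div_pos.2 hbound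
  refine ⟨fun x => a * rademacherSum (levelChi d x) ε, fun x => ?_,
    fun S hS => by rw [fcoeff_mul_rademacherSum_levelChi, if_neg hS], ?_⟩
  · rw [abs_mul, abs_of_pos ha]
    calc a * _ ≤ a * (2 * √(n * n.choose d)) := by gcongr; exact hε x
      _ = 1 := one_div_mul_cancel hbound.ne'
  · have hterm (S) (hS : S ∈ ({S : Finset (Fin n) | S.card = d} : Finset _)) :
        |fcoeff (fun x => a * rademacherSum (levelChi d x) ε) S| = a := by
      rw [fcoeff_mul_rademacherSum_levelChi, if_pos (mem_filter.1 hS).2, abs_mul, abs_sgn,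
        mul_one, abs_of_pos ha]
    rw [sum_congr rfl hterm, sum_const, nsmul_eq_mul, univ_filter_card_eq, card_powersetCard,
      card_univ, Fintype.card_fin, ← div_eq_mul_one_div]
    exact div_two_mul_sqrt_mul (by exact_mod_cast hn) hN
end

section
/- For every integers d ≥ ℓ ≥ 0 with d ≡ ℓ (mod 2) and d ≥ 1, let θ be uniformly distributed over the 2d equally spaced angles {0, π/d, 2π/d, …, (2d−1)π/d}. There exists a function φ : [0, 2π) → ℝ such that E[|φ(θ)|] = |C(d,ℓ)| and E[φ(θ)·cos^k(θ)] = 1 if k = ℓ and E[φ(θ)·cos^k(θ)] = 0 for all integers k with 0 ≤ k ≤ d+1 and k ≠ ℓ. -/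
/-!
On the grid angle with cosine `x_i = cos (iπ/d)` (`0 ≤ i ≤ d`), `φ` carries the coefficient `λ_i`
of `z^ℓ` in the Lagrange basis polynomial of the nodes `x_0 > ⋯ > x_d`, so that
`E[φ(θ) p(cos θ)] = ∑ λ_i p(x_i)`. Exactness of interpolation gives the moments `k ≤ d`. For
`k = d + 1`, `z^(d+1)` agrees on the nodes with `z^(d+1) - ∏ (z - x_j)`, and the `z^ℓ` coefficient
of the nodal polynomial vanishes because the nodes are symmetric under negation and `ℓ ≢ d + 1`.
Interpolating `T_d`, which equals `(-1)^i` at `x_i`, gives `∑ (-1)^i λ_i = C(d, ℓ)`. Finally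
`(-1)^((d-ℓ)/2 + i) λ_i ≥ 0`: the nodal weight has sign `(-1)^i`, and `∏_{j ≠ i} (z - x_j)` is, up
to a factor `z ± x_i` that does not affect its `z^ℓ` coefficient, a product of factors `z`
and `z² - x_j²`, whose coefficients alternate. Hence `∑ |λ_i| = |C(d, ℓ)|`.
-/

open Polynomial Finset

section AlternatingCoeffs

variable {R : Type*} [CommRing R] [LinearOrder R]

/-- The coefficient pattern of `X ^ (n - 2 * k) * ∏ i < k, (X ^ 2 - a i ^ 2)`. -/
def Polynomial.HasAlternatingCoeffs (n : ℕ) (p : R[X]) : Prop :=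
  (∀ m, p.coeff m ≠ 0 → m ≤ n ∧ m % 2 = n % 2) ∧ ∀ m, 0 ≤ (-1) ^ ((n - m) / 2) * p.coeff m

namespace Polynomial.HasAlternatingCoeffs

variable {n : ℕ} {p : R[X]}

theorem one [IsStrictOrderedRing R] : HasAlternatingCoeffs 0 (1 : R[X]) := by
  refine ⟨fun m hm => ?_, fun m => ?_⟩
  · rw [coeff_one] at hm
    split_ifs at hm with h
    · omega
    · exact absurd rfl hm
  · rw [coeff_one]
    split_ifs <;> simp

theorem X_mul (hp : HasAlternatingCoeffs n p) : HasAlternatingCoeffs (n + 1) (X * p) := by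
  refine ⟨fun m hm => ?_, fun m => ?_⟩
  · rcases m with _ | m
    · simp at hm
    · rw [coeff_X_mul] at hm
      have := hp.1 m hm
      omega
  · rcases m with _ | m
    · simp
    · rw [coeff_X_mul, show n + 1 - (m + 1) = n - m by omega]
      exact hp.2 m

theorem X_sq_sub_C_mul [IsStrictOrderedRing R] (hp : HasAlternatingCoeffs n p) {c : R}
    (hc : 0 ≤ c) : HasAlternatingCoeffs (n + 2) ((X ^ 2 - C c) * p) := by
  have hcoeff : ∀ m, ((X ^ 2 - C c) * p).coeff m =
      (if 2 ≤ m then p.coeff (m - 2) else 0) - c * p.coeff m := fun m => by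
    rw [sub_mul, coeff_sub, coeff_X_pow_mul', coeff_C_mul]
  refine ⟨fun m hm => ?_, fun m => ?_⟩
  · rw [hcoeff] at hm
    by_cases h : p.coeff m = 0
    · split_ifs at hm with h2
      · have := hp.1 (m - 2) (by simpa [h] using hm)
        omega
      · simp [h] at hm
    · have := hp.1 m h
      omega
  · have hshift : 0 ≤ (-1) ^ ((n + 2 - m) / 2) * (if 2 ≤ m then p.coeff (m - 2) else 0) := by
      split_ifs with h2
      · rw [show (n + 2 - m) / 2 = (n - (m - 2)) / 2 by omega]
        exact hp.2 _
      · simp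
    have hdrop : 0 ≤ -((-1) ^ ((n + 2 - m) / 2) * (c * p.coeff m)) := by
      by_cases h : p.coeff m = 0
      · simp [h]
      · have := hp.1 m h
        rw [show (n + 2 - m) / 2 = (n - m) / 2 + 1 by omega, pow_succ]
        have := mul_nonneg hc (hp.2 m)
        linarith
    rw [hcoeff, mul_sub]
    linarith

end Polynomial.HasAlternatingCoeffs

theorem Polynomial.hasAlternatingCoeffs_prod_X_sub_C [IsStrictOrderedRing R] {S : Multiset R}
    (hS : S.map Neg.neg = S) :
    HasAlternatingCoeffs (Multiset.card S) (S.map fun a => X - C a).prod := by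
  induction hn : Multiset.card S using Nat.strong_induction_on generalizing S with
  | _ n ih =>
  subst hn
  by_cases h0 : (0 : R) ∈ S
  · obtain ⟨T, rfl⟩ := Multiset.exists_cons_of_mem h0
    have hT : T.map Neg.neg = T := by simpa using hS
    simpa using (ih _ (by simp) hT rfl).X_mul
  rcases Multiset.empty_or_exists_mem S with rfl | ⟨a, ha⟩
  · simpa using HasAlternatingCoeffs.one
  have ha0 : a ≠ 0 := fun h => h0 (h ▸ ha)
  have hna : -a ∈ S.erase a := by
    refine Multiset.mem_erase_of_ne (fun h => ha0 (by linarith)) |>.mpr ?_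
    simpa [hS] using Multiset.mem_map_of_mem Neg.neg ha
  obtain ⟨T, rfl⟩ : ∃ T, S = a ::ₘ -a ::ₘ T :=
    ⟨_, by rw [Multiset.cons_erase hna, Multiset.cons_erase ha]⟩
  have hT : T.map Neg.neg = T := by
    simpa [Multiset.cons_swap] using hS
  have hpair : (X - C a) * (X - C (-a)) = X ^ 2 - C (a ^ 2) := by
    rw [map_neg, map_pow]
    ring
  rw [Multiset.map_cons, Multiset.map_cons, Multiset.prod_cons, Multiset.prod_cons, ← mul_assoc,
    hpair, Multiset.card_cons, Multiset.card_cons, add_assoc]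
  exact (ih _ (by simp) hT rfl).X_sq_sub_C_mul (sq_nonneg a)

end AlternatingCoeffs

theorem Lagrange.nodal_eq_prod_map {R ι : Type*} [CommRing R] (s : Finset ι) (v : ι → R) :
    nodal s v = ((s.val.map v).map fun a => X - C a).prod := by
  rw [nodal, prod_eq_multiset_prod, Multiset.map_map]
  rfl

section LagrangeCoefficients

variable {F ι : Type*} [Field F] [DecidableEq ι] {s : Finset ι} {v : ι → F}

theorem Lagrange.coeff_eq_sum_eval_mul_coeff_basis (hvs : Set.InjOn v s) {f : F[X]}
    (hf : f.degree < #s) (ℓ : ℕ) :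
    f.coeff ℓ = ∑ i ∈ s, f.eval (v i) * (Lagrange.basis s v i).coeff ℓ := by
  conv_lhs => rw [eq_interpolate hvs hf]
  simp [interpolate_apply, coeff_C_mul]

theorem Lagrange.sum_pow_card_mul_coeff_basis (hvs : Set.InjOn v s) (ℓ : ℕ) :
    ∑ i ∈ s, v i ^ #s * (Lagrange.basis s v i).coeff ℓ = (X ^ #s - nodal s v).coeff ℓ := by
  have hdeg : (X ^ #s - nodal s v).degree < (#s : WithBot ℕ) := by
    have hlt := degree_sub_lt_left (p := X ^ #s) (q := nodal s v)
      (by rw [degree_X_pow, degree_nodal]) (pow_ne_zero _ X_ne_zero)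
      (by rw [leadingCoeff_X_pow, nodal_monic.leadingCoeff])
    rwa [degree_X_pow] at hlt
  rw [coeff_eq_sum_eval_mul_coeff_basis hvs hdeg]
  refine sum_congr rfl fun i hi => ?_
  rw [eval_sub, eval_pow, eval_X, eval_nodal_at_node hi, sub_zero]

theorem Lagrange.basis_eq_C_nodalWeight_mul_nodal_erase {i : ι} (hi : i ∈ s) :
    Lagrange.basis s v i = C (nodalWeight s v i) * nodal (s.erase i) v := by
  rw [basis_eq_prod_sub_inv_mul_nodal_div hi, nodal_erase_eq_nodal_div hi]

end LagrangeCoefficients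

theorem neg_one_pow_mul_prod_erase_sub_pos {R : Type*} [CommRing R] [LinearOrder R]
    [IsStrictOrderedRing R] {v : ℕ → R} {n i : ℕ} (hv : StrictAntiOn v (Set.Iic n)) (hi : i ≤ n) :
    0 < (-1) ^ i * ∏ j ∈ (range (n + 1)).erase i, (v i - v j) := by
  have hsplit : (range (n + 1)).erase i = range i ∪ Ioc i n := by
    ext j
    simp only [mem_erase, mem_range, mem_union, mem_Ioc]
    omega
  have hdisj : Disjoint (range i) (Ioc i n) := by
    simp only [disjoint_left, mem_range, mem_Ioc]
    omega
  have hflip : (-1) ^ i * ∏ j ∈ range i, (v i - v j) = ∏ j ∈ range i, (v j - v i) := by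
    rw [← card_range i, ← prod_const, card_range, ← prod_mul_distrib]
    exact prod_congr rfl fun j _ => by ring
  rw [hsplit, prod_union hdisj, ← mul_assoc, hflip]
  refine mul_pos (prod_pos fun j hj => ?_) (prod_pos fun j hj => ?_)
  · simp only [mem_range] at hj
    exact sub_pos.mpr (hv (by simp; omega) (by simpa using hi) hj)
  · simp only [mem_Ioc] at hj
    exact sub_pos.mpr (hv (by simpa using hi) (by simpa using hj.2) hj.1)

section ChebyshevNodes

open Real

variable {d : ℕ}

noncomputable def chebNode (d i : ℕ) : ℝ := cos (i * π / d)

theorem chebNode_strictAntiOn (hd : 0 < d) : StrictAntiOn (chebNode d) (Set.Iic d) := by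
  have hd' : (0 : ℝ) < d := by exact_mod_cast hd
  have hmem : ∀ k ∈ Set.Iic d, (k * π / d : ℝ) ∈ Set.Icc 0 π := fun k hk =>
    ⟨by positivity, by rw [div_le_iff₀ hd', mul_comm]; gcongr; exact_mod_cast hk⟩
  intro i hi j hj hij
  exact strictAntiOn_cos (hmem i hi) (hmem j hj) (by gcongr)

theorem chebNode_injOn (hd : 0 < d) : Set.InjOn (chebNode d) (range (d + 1)) :=
  (chebNode_strictAntiOn hd).injOn.mono fun i hi => by simp at hi ⊢; omega

theorem chebNode_sub (hd : 0 < d) {i : ℕ} (hi : i ≤ d) : chebNode d (d - i) = -chebNode d i := by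
  have harg : ((d - i : ℕ) : ℝ) * π / d = (1 : ℕ) * π - i * π / d := by
    rw [Nat.cast_sub hi]
    field_simp
    ring
  rw [chebNode, harg, cos_nat_mul_pi_sub, chebNode]
  ring

theorem eval_T_chebNode (hd : 0 < d) (i : ℕ) :
    (Chebyshev.T ℝ d).eval (chebNode d i) = (-1) ^ i := by
  have harg : ((d : ℤ) : ℝ) * (i * π / d) = i * π - 0 := by
    push_cast
    field_simp
    ring
  rw [chebNode, Chebyshev.T_real_cos, harg, cos_nat_mul_pi_sub, cos_zero, mul_one]

theorem map_neg_map_chebNode (hd : 0 < d) {E : Finset ℕ} (hE : ∀ j ∈ E, j ≤ d ∧ d - j ∈ E) :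
    (E.val.map (chebNode d)).map Neg.neg = E.val.map (chebNode d) := by
  have hinj : Set.InjOn (d - ·) E := fun a ha b hb hab => by
    have := (hE a ha).1
    have := (hE b hb).1
    simp only at hab
    omega
  have hreflect : E.image (d - ·) = E := by
    ext j
    refine ⟨fun hj => ?_, fun hj => mem_image.mpr ⟨d - j, (hE j hj).2, ?_⟩⟩
    · obtain ⟨k, hk, rfl⟩ := mem_image.mp hj
      exact (hE k hk).2
    · have := (hE j hj).1
      omega
  calc (E.val.map (chebNode d)).map Neg.neg = E.val.map (chebNode d ∘ (d - ·)) := by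
        rw [Multiset.map_map]
        exact Multiset.map_congr rfl fun j hj => (chebNode_sub hd (hE j hj).1).symm
    _ = (E.image (d - ·)).val.map (chebNode d) := by
        rw [image_val_of_injOn hinj, Multiset.map_map]
    _ = E.val.map (chebNode d) := by rw [hreflect]

theorem hasAlternatingCoeffs_nodal_chebNode (hd : 0 < d) {E : Finset ℕ}
    (hE : ∀ j ∈ E, j ≤ d ∧ d - j ∈ E) :
    HasAlternatingCoeffs #E (Lagrange.nodal E (chebNode d)) := by
  simpa [Lagrange.nodal_eq_prod_map] using
    hasAlternatingCoeffs_prod_X_sub_C (map_neg_map_chebNode hd hE)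

theorem coeff_nodal_erase_chebNode_sign (hd : 0 < d) {ℓ i : ℕ} (hpar : d % 2 = ℓ % 2)
    (hi : i ≤ d) :
    0 ≤ (-1) ^ ((d - ℓ) / 2) * (Lagrange.nodal ((range (d + 1)).erase i) (chebNode d)).coeff ℓ := by
  by_cases hc : 2 * i = d
  · have h := hasAlternatingCoeffs_nodal_chebNode hd (E := (range (d + 1)).erase i)
      fun j hj => by simp only [mem_erase, mem_range] at hj ⊢; omega
    rw [card_erase_of_mem (by simpa using hi), card_range, Nat.add_sub_cancel] at h
    exact h.2 ℓ
  -- off the centre, the partner node `d - i` is the only obstruction to symmetry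
  have hmem : d - i ∈ (range (d + 1)).erase i := by simp only [mem_erase, mem_range]; omega
  set E := ((range (d + 1)).erase i).erase (d - i)
  have hB := hasAlternatingCoeffs_nodal_chebNode hd (E := E)
    fun j hj => by simp only [E, mem_erase, mem_range] at hj ⊢; omega
  have hcard : #E = d - 1 := by
    rw [card_erase_of_mem hmem, card_erase_of_mem (by simpa using hi), card_range]
    omega
  rw [hcard] at hB
  have hXB := hB.X_mul
  rw [Nat.sub_add_cancel hd] at hXB
  have hBℓ : (Lagrange.nodal E (chebNode d)).coeff ℓ = 0 := by
    by_contra h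
    have := hB.1 ℓ h
    omega
  rw [Lagrange.nodal_eq_mul_nodal_erase hmem, sub_mul, coeff_sub, coeff_C_mul, hBℓ, mul_zero,
    sub_zero]
  exact hXB.2 ℓ

end ChebyshevNodes

section ChebyshevWeights

variable {d ℓ : ℕ}

noncomputable def chebWeight (d ℓ i : ℕ) : ℝ :=
  (Lagrange.basis (range (d + 1)) (chebNode d) i).coeff ℓ

theorem sum_chebWeight_mul_pow_of_le (hd : 0 < d) {k : ℕ} (hk : k ≤ d) :
    ∑ i ∈ range (d + 1), chebWeight d ℓ i * chebNode d i ^ k = if k = ℓ then 1 else 0 := by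
  have h := Lagrange.coeff_eq_sum_eval_mul_coeff_basis (chebNode_injOn hd) (f := X ^ k)
    (by rw [degree_X_pow, card_range]; exact_mod_cast Nat.lt_succ_of_le hk) ℓ
  simp only [coeff_X_pow, eval_pow, eval_X] at h
  simp only [chebWeight, mul_comm, ← h, eq_comm]

theorem sum_chebWeight_mul_pow (hd : 0 < d) (hpar : d % 2 = ℓ % 2) {k : ℕ} (hk : k ≤ d + 1) :
    ∑ i ∈ range (d + 1), chebWeight d ℓ i * chebNode d i ^ k = if k = ℓ then 1 else 0 := by
  rcases Nat.lt_or_ge k (d + 1) with hk' | hk'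
  · exact sum_chebWeight_mul_pow_of_le hd (by omega)
  obtain rfl : k = d + 1 := by omega
  have hnodal : (Lagrange.nodal (range (d + 1)) (chebNode d)).coeff ℓ = 0 := by
    by_contra h
    have := (hasAlternatingCoeffs_nodal_chebNode hd (fun j hj => by simp at hj ⊢; omega)).1 ℓ h
    simp only [card_range] at this
    omega
  have h := Lagrange.sum_pow_card_mul_coeff_basis (chebNode_injOn hd) ℓ
  rw [card_range, coeff_sub, coeff_X_pow, hnodal, if_neg (by omega)] at h
  simp only [chebWeight, mul_comm, h, if_neg (show d + 1 ≠ ℓ by omega), sub_zero]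

theorem sum_chebWeight_mul_neg_one_pow (hd : 0 < d) :
    ∑ i ∈ range (d + 1), chebWeight d ℓ i * (-1) ^ i = chebCoeff d ℓ := by
  have h := Lagrange.coeff_eq_sum_eval_mul_coeff_basis (chebNode_injOn hd)
    (f := Chebyshev.T ℝ d) (by rw [Chebyshev.degree_T, card_range]; exact_mod_cast d.lt_succ_self) ℓ
  simp only [eval_T_chebNode hd] at h
  simp only [chebCoeff, h, chebWeight, mul_comm]

theorem chebWeight_sign (hd : 0 < d) (hpar : d % 2 = ℓ % 2) {i : ℕ} (hi : i ≤ d) :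
    0 ≤ (-1) ^ ((d - ℓ) / 2 + i) * chebWeight d ℓ i := by
  have hweight : 0 < (-1) ^ i * Lagrange.nodalWeight (range (d + 1)) (chebNode d) i := by
    have h := neg_one_pow_mul_prod_erase_sub_pos (chebNode_strictAntiOn hd) hi
    rw [Lagrange.nodalWeight, prod_inv_distrib, ← inv_inv ((-1 : ℝ) ^ i), ← mul_inv, ← inv_pow,
      inv_neg_one]
    exact inv_pos.mpr h
  rw [chebWeight, Lagrange.basis_eq_C_nodalWeight_mul_nodal_erase (by simpa using hi), coeff_C_mul,
    pow_add]
  have := mul_nonneg hweight.le (coeff_nodal_erase_chebNode_sign hd hpar hi)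
  linarith

theorem sum_abs_chebWeight (hd : 0 < d) (hpar : d % 2 = ℓ % 2) :
    ∑ i ∈ range (d + 1), |chebWeight d ℓ i| = |chebCoeff d ℓ| := by
  set r := (d - ℓ) / 2
  have habs : ∀ i ∈ range (d + 1), |chebWeight d ℓ i| = (-1) ^ r * (chebWeight d ℓ i * (-1) ^ i) :=
    fun i hi => by
      have h := chebWeight_sign hd hpar (by simpa [Nat.lt_succ_iff] using hi)
      calc |chebWeight d ℓ i| = |(-1) ^ (r + i) * chebWeight d ℓ i| := by
            rw [abs_mul, abs_pow, abs_neg, abs_one, one_pow, one_mul]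
        _ = (-1) ^ r * (chebWeight d ℓ i * (-1) ^ i) := by rw [abs_of_nonneg h, pow_add]; ring
  have hsum : ∑ i ∈ range (d + 1), |chebWeight d ℓ i| = (-1) ^ r * chebCoeff d ℓ := by
    rw [sum_congr rfl habs, ← mul_sum, sum_chebWeight_mul_neg_one_pow hd]
  have hnonneg : 0 ≤ (-1) ^ r * chebCoeff d ℓ := hsum ▸ sum_nonneg fun i _ => abs_nonneg _
  rw [hsum, ← abs_of_nonneg hnonneg, abs_mul, abs_pow, abs_neg, abs_one, one_pow, one_mul]

end ChebyshevWeights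

theorem Finset.sum_div_card_fiber {α β K : Type*} [DecidableEq β] [Field K] [CharZero K]
    (s : Finset α) (f : α → β) (G : β → K) :
    ∑ j ∈ s, G (f j) / #{j' ∈ s | f j' = f j} = ∑ i ∈ s.image f, G i := by
  refine (sum_image' _ fun j hj => ?_).symm
  have hcard : (#{j' ∈ s | f j' = f j} : K) ≠ 0 :=
    Nat.cast_ne_zero.mpr (card_ne_zero_of_mem (mem_filter.mpr ⟨hj, rfl⟩))
  rw [sum_congr rfl fun j' hj' => by rw [(mem_filter.mp hj').2], sum_const, nsmul_eq_mul,
    mul_div_cancel₀ _ hcard]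

section AngleGrid

open Real

variable {d : ℕ}

def foldIndex (d j : ℕ) : ℕ := min j (2 * d - j)

theorem cos_eq_chebNode_foldIndex (hd : 0 < d) {j : ℕ} (hj : j ≤ 2 * d) :
    cos (j * π / d) = chebNode d (foldIndex d j) := by
  rcases le_total j d with hjd | hjd
  · rw [foldIndex, min_eq_left (by omega), chebNode]
  rw [foldIndex, min_eq_right (by omega), chebNode]
  have harg : ((2 * d - j : ℕ) : ℝ) * π / d = (1 : ℕ) * (2 * π) - j * π / d := by
    rw [Nat.cast_sub hj]
    field_simp
    push_cast
    ring
  rw [harg, cos_nat_mul_two_pi_sub]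

theorem image_foldIndex (hd : 0 < d) : (range (2 * d)).image (foldIndex d) = range (d + 1) := by
  ext i
  simp only [mem_image, mem_range, foldIndex]
  exact ⟨fun ⟨j, hj, hji⟩ => by omega, fun hi => ⟨i, by omega, by omega⟩⟩

/-- The angle `θ` is read as the grid index `round (θ d / π)`; the mass `2d · G i` of node `i` is
shared equally among the grid angles with cosine `chebNode d i`. -/
noncomputable def gridFun (d : ℕ) (G : ℕ → ℝ) (θ : ℝ) : ℝ :=
  let j := (round (θ * d / π)).toNat
  2 * d * G (foldIndex d j) / #{j' ∈ range (2 * d) | foldIndex d j' = foldIndex d j}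

theorem gridFun_apply (hd : 0 < d) (G : ℕ → ℝ) (j : ℕ) :
    gridFun d G (j * π / d) =
      2 * d * G (foldIndex d j) / #{j' ∈ range (2 * d) | foldIndex d j' = foldIndex d j} := by
  have hidx : (j * π / d : ℝ) * d / π = j := by field_simp
  simp only [gridFun, hidx, round_natCast, Int.toNat_natCast]

theorem abs_gridFun (G : ℕ → ℝ) (θ : ℝ) : |gridFun d G θ| = gridFun d (fun i => |G i|) θ := by
  simp only [gridFun, abs_div, abs_mul, Nat.abs_cast, abs_two]

theorem sum_gridFun_mul_div (hd : 0 < d) (G : ℕ → ℝ) (H : ℝ → ℝ) :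
    (∑ j ∈ range (2 * d), gridFun d G (j * π / d) * H (cos (j * π / d))) / (2 * d) =
      ∑ i ∈ range (d + 1), G i * H (chebNode d i) := by
  rw [← image_foldIndex hd, ← sum_div_card_fiber, sum_div, sum_congr rfl fun j hj => ?_]
  rw [gridFun_apply hd, cos_eq_chebNode_foldIndex hd (mem_range.mp hj).le]
  field_simp

end AngleGrid

theorem stmt7_general (d ℓ : ℕ) (hd : 1 ≤ d) (hpar : d % 2 = ℓ % 2) :
    ∃ φ : ℝ → ℝ,
      (∑ j ∈ Finset.range (2 * d), |φ (j * Real.pi / d)|) / (2 * d) = |chebCoeff d ℓ| ∧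
      (∀ k : ℕ, k ≤ d + 1 →
        (∑ j ∈ Finset.range (2 * d),
            φ (j * Real.pi / d) * Real.cos (j * Real.pi / d) ^ k) / (2 * d) =
          if k = ℓ then 1 else 0) := by
  refine ⟨gridFun d (chebWeight d ℓ), ?_, fun k hk => ?_⟩
  · have h := sum_gridFun_mul_div hd (fun i => |chebWeight d ℓ i|) fun _ => 1
    simp only [mul_one] at h
    simp only [abs_gridFun, h, sum_abs_chebWeight hd hpar]
  · rw [sum_gridFun_mul_div hd _ (· ^ k), sum_chebWeight_mul_pow hd hpar hk]

/-- Existence of the filter: for `d ≥ ℓ ≥ 0` with `d ≡ ℓ (mod 2)` and `d ≥ 1`, with `θ`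
uniform on the `2d` equally spaced angles `{jπ/d : j = 0,…,2d−1}`, there is
`φ : [0,2π) → ℝ` with `E[|φ(θ)|] = |C(d,ℓ)|`, `E[φ(θ) cos^ℓ(θ)] = 1`, and
`E[φ(θ) cos^k(θ)] = 0` for all `k ≤ d+1` with `k ≠ ℓ`. -/
theorem stmt7 (d ℓ : ℕ) (hd : 1 ≤ d) (hld : ℓ ≤ d) (hpar : d % 2 = ℓ % 2) :
    ∃ φ : ℝ → ℝ,
      (∑ j ∈ Finset.range (2 * d), |φ (j * Real.pi / d)|) / (2 * d) = |chebCoeff d ℓ| ∧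
      (∀ k : ℕ, k ≤ d + 1 →
        (∑ j ∈ Finset.range (2 * d),
            φ (j * Real.pi / d) * Real.cos (j * Real.pi / d) ^ k) / (2 * d) =
          if k = ℓ then 1 else 0) :=
  stmt7_general d ℓ hd hpar
end
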